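/- arXiv:2109.09249 — 2 statements merged into one kernel-verified Lean document; each statement's English description precedes it below -/
import Mathlib

section
/- Let n ≥ 2 and let K_{1,n−1} be the star graph on n vertices. For every tree T on n vertices, the sum of the reciprocals of the n−1 nonzero eigenvalues of the normalized Laplacian of T is greater than or equal to the corresponding sum for K_{1,n−1}, with equality if and only if T is isomorphic to K_{1,n−1}. (This expresses that among all simple trees of a fixed size the star has the smallest Kemeny's constant κ.) -/
open scoped Classical

noncomputable section

/-- A weighted graph on vertex set `Fin n`: a simple graph together with a symmetric
weight function which is positive on edges and zero on non-edges. -/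
structure WGraph (n : ℕ) where
  G : SimpleGraph (Fin n)
  w : Fin n → Fin n → ℝ
  symm : ∀ u v, w u v = w v u
  pos : ∀ u v, G.Adj u v → 0 < w u v
  zero : ∀ u v, ¬ G.Adj u v → w u v = 0

namespace WGraph

variable {n : ℕ}

/-- The weighted degree `d_G(u) = Σ_v ω(uv)`. -/
def deg (T : WGraph n) (u : Fin n) : ℝ := ∑ v, T.w u v

/-- The volume of the whole graph: sum of all weighted degrees. -/
def vol (T : WGraph n) : ℝ := ∑ u, T.deg u

/-- The combinatorial Laplacian `L = D - A`. -/
def lap (T : WGraph n) : Matrix (Fin n) (Fin n) ℝ :=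
  Matrix.of fun u v => (if u = v then T.deg u else 0) - T.w u v

/-- The normalized Laplacian `𝓛 = D^{-1/2} L D^{-1/2}`. -/
def nlap (T : WGraph n) : Matrix (Fin n) (Fin n) ℝ :=
  Matrix.of fun u v => T.lap u v / (Real.sqrt (T.deg u) * Real.sqrt (T.deg v))

/-- The weight of an (unordered) edge. -/
def ew (T : WGraph n) : Sym2 (Fin n) → ℝ := Sym2.lift ⟨T.w, T.symm⟩

/-- `ω(H)`: the product of the weights of all edges of a (spanning) subgraph `H`. -/
def wOf (T : WGraph n) (H : SimpleGraph (Fin n)) : ℝ := ∏ᶠ e ∈ H.edgeSet, T.ew e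

/-- `τ(G)`: the sum of `ω(H)` over all spanning trees `H` of `G`. -/
def tau (T : WGraph n) : ℝ :=
  ∑ᶠ H ∈ {H : SimpleGraph (Fin n) | H ≤ T.G ∧ H.IsTree}, T.wOf H

/-- The multiset of edge-weights of a weighted graph. -/
def edgeWeights (T : WGraph n) : Multiset ℝ := T.G.edgeFinset.val.map T.ew

end WGraph

/-- The sum of the reciprocals of the nonzero eigenvalues of a hermitian real matrix
(in `ℝ`, `0⁻¹ = 0`, so the zero eigenvalues contribute nothing to the sum). -/
def sumInvEig {n : ℕ} (M : Matrix (Fin n) (Fin n) ℝ) : ℝ :=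
  if h : M.IsHermitian then ∑ i, (h.eigenvalues i)⁻¹ else 0

/-- `H` is a spanning 2-forest of `G`: an acyclic subgraph of `G` on the full
vertex set with exactly two connected components. -/
def IsTwoForestOf {n : ℕ} (G H : SimpleGraph (Fin n)) : Prop :=
  H ≤ G ∧ H.IsAcyclic ∧ Nat.card H.ConnectedComponent = 2

/-- `S(F)`: the product of the numbers of vertices of the components of `F`. -/
def SVal {n : ℕ} (F : SimpleGraph (Fin n)) : ℝ :=
  ∏ᶠ c : F.ConnectedComponent, (Nat.card c.supp : ℝ)

/-- `V_T(F)`: the product over the components of `F` of their volumes in `T`,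
i.e. of the sums of `T`-degrees of their vertices. -/
def VVal {n : ℕ} (T : WGraph n) (F : SimpleGraph (Fin n)) : ℝ :=
  ∏ᶠ c : F.ConnectedComponent, ∑ᶠ u ∈ c.supp, T.deg u

/-- The number of vertices of the connected component of `v` in `H`. -/
def compSize {n : ℕ} (H : SimpleGraph (Fin n)) (v : Fin n) : ℕ :=
  Nat.card ((H.connectedComponentMk v).supp)

/-- The volume of the connected component of `v` in `H`, computed intrinsically
(with the weights of `T`): the sum over vertices `u` of the component of the sum of
weights of edges of the component at `u`. -/
def compVol {n : ℕ} (T : WGraph n) (H : SimpleGraph (Fin n)) (v : Fin n) : ℝ :=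
  ∑ᶠ u ∈ (H.connectedComponentMk v).supp, ∑ᶠ x ∈ (H.connectedComponentMk v).supp, T.w u x

/-- The common part of the two edge-transfer operations: `T'` is obtained from `T` by
deleting the edge `e₂ = v₂v₃` and adding the edge `v₁v₃` carrying the weight of `e₂`,
where `e₁ = v₁v₂` and `e₂ = v₂v₃` are adjacent edges of `T`. -/
def EdgeTransferAux {n : ℕ} (T T' : WGraph n) (v1 v2 v3 : Fin n) : Prop :=
  T.G.Adj v1 v2 ∧ T.G.Adj v2 v3 ∧ v1 ≠ v3 ∧
  T'.G = T.G.deleteEdges {s(v2, v3)} ⊔ SimpleGraph.fromEdgeSet {s(v1, v3)} ∧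
  T'.w v1 v3 = T.w v2 v3 ∧
  (∀ u v : Fin n, s(u, v) ≠ s(v1, v3) → s(u, v) ≠ s(v2, v3) → T'.w u v = T.w u v)

/-- `T` edge-transfers to `T'` with respect to size (via `v₁, v₂, v₃`):
the component `T₁` of `T ∖ {e₁, e₂}` containing `v₁` has more vertices than the
component `T₂` containing `v₂`. -/
def EdgeTransferSize {n : ℕ} (T T' : WGraph n) (v1 v2 v3 : Fin n) : Prop :=
  EdgeTransferAux T T' v1 v2 v3 ∧
  compSize (T.G.deleteEdges {s(v1, v2), s(v2, v3)}) v2 <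
    compSize (T.G.deleteEdges {s(v1, v2), s(v2, v3)}) v1

/-- `T` edge-transfers to `T'` with respect to volume (via `v₁, v₂, v₃`):
the component `T₁` of `T ∖ {e₁, e₂}` containing `v₁` has larger intrinsic volume than
the component `T₂` containing `v₂`. -/
def EdgeTransferVol {n : ℕ} (T T' : WGraph n) (v1 v2 v3 : Fin n) : Prop :=
  EdgeTransferAux T T' v1 v2 v3 ∧
  compVol T (T.G.deleteEdges {s(v1, v2), s(v2, v3)}) v2 <
    compVol T (T.G.deleteEdges {s(v1, v2), s(v2, v3)}) v1

/-- Isomorphism of weighted graphs: a graph isomorphism preserving the weights. -/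
def WIso {n : ℕ} (T T' : WGraph n) : Prop :=
  ∃ f : T.G ≃g T'.G, ∀ u v, T'.w (f u) (f v) = T.w u v

/-- The star graph on `Fin n`, centered at the vertex `0`. -/
def starGraph (n : ℕ) : SimpleGraph (Fin n) :=
  SimpleGraph.fromRel fun u _ => u.val = 0

/-- `T` is a polarized weighted path: its underlying graph is a path
`v₁ v₂ … v_n` and, writing `e_i = v_i v_{i+1}` and `c(e_i) = min {i, n - i}`,
one has `ω(e_i) ≥ ω(e_j)` whenever `c(e_i) ≤ c(e_j)`. -/
def IsPolarizedPath {n : ℕ} (T : WGraph n) : Prop :=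
  ∃ f : SimpleGraph.pathGraph n ≃g T.G,
    ∀ (i j : ℕ) (hi : i + 1 < n) (hj : j + 1 < n),
      min (i + 1) (n - 1 - i) ≤ min (j + 1) (n - 1 - j) →
      T.w (f ⟨j, by omega⟩) (f ⟨j + 1, hj⟩) ≤ T.w (f ⟨i, by omega⟩) (f ⟨i + 1, hi⟩)

/-- Unweighted: adjacency indicator. -/
def adjW {n : ℕ} (G : SimpleGraph (Fin n)) (u v : Fin n) : ℝ := if G.Adj u v then 1 else 0

/-- Unweighted degree. -/
def degG {n : ℕ} (G : SimpleGraph (Fin n)) (u : Fin n) : ℝ := ∑ v, adjW G u v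

/-- The combinatorial Laplacian `L = D - A` of a simple graph. -/
def lapG {n : ℕ} (G : SimpleGraph (Fin n)) : Matrix (Fin n) (Fin n) ℝ :=
  Matrix.of fun u v => (if u = v then degG G u else 0) - adjW G u v

/-- The normalized Laplacian `𝓛 = D^{-1/2} L D^{-1/2}` of a simple graph. -/
def nlapG {n : ℕ} (G : SimpleGraph (Fin n)) : Matrix (Fin n) (Fin n) ℝ :=
  Matrix.of fun u v => lapG G u v / (Real.sqrt (degG G u) * Real.sqrt (degG G v))

/-!
The normalized Laplacian `𝓛 = D^{-1/2} L D^{-1/2}` of a tree has the simple kernel spanned by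
`φ = D^{1/2} 𝟙 / √vol`, so the sum of the reciprocals of its nonzero eigenvalues is
`tr (M (I - φφᵀ))` for any `M` with `𝓛 M = I - φφᵀ`. In a tree exactly one neighbour of `u ≠ w`
is closer to `w`, so `L` maps `dist(·, w)` to `2·[· ≠ w] - d`, and such an `M` is built from the
distance matrix. Applying `L` to `dist(·, w)²` and summing gives
`Σ_v d_v dist(v, w) = 2 Σ_v dist(v, w) - (n - 1)`, and evaluating the trace gives
`Σ 1/μ_i = W/(n - 1) - (2n - 1)/2` with `W = Σ_{u,v} dist(u, v)`.
Finally `dist ≥ min(dist, 2)` and `Σ_{u,v} min(dist(u, v), 2) = 2(n - 1)²` in every tree, so `W` is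
minimal exactly for the trees of diameter at most 2, which are the stars.
-/

open Matrix

section Spectral

variable {ι : Type*} [Fintype ι] [DecidableEq ι] {A M : Matrix ι ι ℝ} {φ : ι → ℝ}

theorem Matrix.IsSymm.dotProduct_mul_projection_mulVec_eq_inv (hAs : A.IsSymm) (hφ : A *ᵥ φ = 0)
    (hAM : A * M = 1 - vecMulVec φ φ) {v : ι → ℝ} {μ : ℝ} (hv : A *ᵥ v = μ • v)
    (hvv : v ⬝ᵥ v = 1) : v ⬝ᵥ (M * (1 - vecMulVec φ φ)) *ᵥ v = μ⁻¹ := by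
  have hsymm : ∀ x y, x ⬝ᵥ A *ᵥ y = A *ᵥ x ⬝ᵥ y := fun x y => by
    rw [dotProduct_mulVec, ← mulVec_transpose, hAs.eq]
  rcases eq_or_ne μ 0 with rfl | hμ
  · have hP : (1 - vecMulVec φ φ) *ᵥ v = 0 := by
      have hPT : (1 - vecMulVec φ φ) = Mᵀ * A := by
        rw [← hAs.eq, ← transpose_mul, hAM, transpose_sub, transpose_one, transpose_vecMulVec]
      rw [hPT, ← mulVec_mulVec, hv, zero_smul, mulVec_zero]
    rw [← mulVec_mulVec, hP, mulVec_zero, dotProduct_zero, _root_.inv_zero]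
  · have hφv : φ ⬝ᵥ v = 0 := by
      have h : μ * (φ ⬝ᵥ v) = 0 := by
        rw [← smul_eq_mul, ← dotProduct_smul, ← hv, hsymm, hφ, zero_dotProduct]
      exact (mul_eq_zero.mp h).resolve_left hμ
    have hPv : (1 - vecMulVec φ φ) *ᵥ v = v := by
      simp [sub_mulVec, vecMulVec_mulVec, hφv]
    have h : μ * (v ⬝ᵥ M *ᵥ v) = 1 := by
      rw [← smul_eq_mul, ← smul_dotProduct, ← hv, ← hsymm, mulVec_mulVec, hAM, hPv, hvv]
    rw [← mulVec_mulVec, hPv, eq_inv_of_mul_eq_one_right h]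

theorem Matrix.IsHermitian.sum_inv_eigenvalues_eq_trace (hA : A.IsHermitian) (hφ : A *ᵥ φ = 0)
    (hAM : A * M = 1 - vecMulVec φ φ) :
    ∑ i, (hA.eigenvalues i)⁻¹ = trace (M * (1 - vecMulVec φ φ)) := by
  rw [← trace_toLin_eq _ (EuclideanSpace.basisFun ι ℝ).toBasis,
    ← toEuclideanLin_eq_toLin_orthonormal, LinearMap.trace_eq_sum_inner _ hA.eigenvectorBasis]
  refine Finset.sum_congr rfl fun i _ => ?_
  set v := hA.eigenvectorBasis i
  have hvv : ⇑v ⬝ᵥ ⇑v = 1 := by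
    have h := EuclideanSpace.inner_eq_star_dotProduct v v
    rw [real_inner_self_eq_norm_sq, hA.eigenvectorBasis.orthonormal.1 i] at h
    simpa using h.symm
  have hAs : A.IsSymm := by simpa [IsSymm] using hA.eq
  rw [EuclideanSpace.inner_eq_star_dotProduct, star_trivial, toLpLin_apply, dotProduct_comm,
    hAs.dotProduct_mul_projection_mulVec_eq_inv hφ hAM (hA.mulVec_eigenvectorBasis i) hvv]

end Spectral

namespace SimpleGraph

variable {V : Type*} {G : SimpleGraph V}

theorem IsTree.eq_of_adj_of_dist_add_one_eq (hT : G.IsTree) {u v v' w : V} (hv : G.Adj u v)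
    (hv' : G.Adj u v') (h : G.dist v w + 1 = G.dist u w) (h' : G.dist v' w + 1 = G.dist u w) :
    v = v' := by
  obtain ⟨q, hq⟩ := hT.connected.exists_walk_length_eq_dist v w
  obtain ⟨q', hq'⟩ := hT.connected.exists_walk_length_eq_dist v' w
  have hp := (q.cons hv).isPath_of_length_eq_dist (by simp [hq, h])
  have hp' := (q'.cons hv').isPath_of_length_eq_dist (by simp [hq', h'])
  have := (hT.isAcyclic.subsingleton_path u w).elim ⟨_, hp⟩ ⟨_, hp'⟩
  simpa using congrArg (fun p : G.Path u w => p.val.snd) this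

theorem IsTree.exists_adj_dist_add_one_eq (hT : G.IsTree) {u w : V} (huw : u ≠ w) :
    ∃ c, G.Adj u c ∧ G.dist c w + 1 = G.dist u w := by
  obtain ⟨p, hp⟩ := hT.connected.exists_walk_length_eq_dist u w
  have hnil : ¬ p.Nil := fun h => huw h.eq
  refine ⟨p.snd, p.adj_snd hnil, le_antisymm ?_ ?_⟩
  · have := dist_le p.tail
    have := p.length_tail_add_one hnil
    omega
  · have := hT.connected.dist_triangle (u := u) (v := p.snd) (w := w)
    rw [dist_eq_one_iff_adj.mpr (p.adj_snd hnil)] at this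
    omega

section Fintype

variable [Fintype V] [DecidableRel G.Adj]

theorem IsTree.sum_neighborFinset_dist_of_ne {M : Type*} [AddCommMonoid M] (hT : G.IsTree)
    {u w : V} (huw : u ≠ w) (f : ℕ → M) :
    ∑ v ∈ G.neighborFinset u, f (G.dist v w) =
      f (G.dist u w - 1) + (G.degree u - 1) • f (G.dist u w + 1) := by
  obtain ⟨c, hc, hcd⟩ := hT.exists_adj_dist_add_one_eq huw
  have hcloser : {v ∈ G.neighborFinset u | G.dist v w + 1 = G.dist u w} = {c} := by
    ext v
    simp only [Finset.mem_filter, mem_neighborFinset, Finset.mem_singleton]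
    exact ⟨fun h => hT.eq_of_adj_of_dist_add_one_eq h.1 hc h.2 hcd,
      fun h => h ▸ ⟨hc, hcd⟩⟩
  have hfarther : ∀ v ∈ {v ∈ G.neighborFinset u | ¬ G.dist v w + 1 = G.dist u w},
      G.dist v w = G.dist u w + 1 := by
    intro v hv
    simp only [Finset.mem_filter, mem_neighborFinset] at hv
    have := hT.dist_eq_dist_add_one_of_adj w hv.1
    rw [dist_comm, dist_comm (u := w) (v := v)] at this
    omega
  have hcard := Finset.card_filter_add_card_filter_not
    (s := G.neighborFinset u) (fun v => G.dist v w + 1 = G.dist u w)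
  rw [hcloser, Finset.card_singleton, card_neighborFinset_eq_degree] at hcard
  rw [← Finset.sum_filter_add_sum_filter_not _ (fun v => G.dist v w + 1 = G.dist u w), hcloser,
    Finset.sum_singleton, Finset.sum_congr rfl fun v hv => congrArg f (hfarther v hv),
    Finset.sum_const, show G.dist c w = G.dist u w - 1 by omega]
  congr 2
  omega

theorem sum_sum_neighborFinset {M : Type*} [AddCommMonoid M] (g : V → M) :
    ∑ u, ∑ v ∈ G.neighborFinset u, g v = ∑ v, G.degree v • g v := by
  simp_rw [neighborFinset_eq_filter, Finset.sum_filter]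
  rw [Finset.sum_comm]
  refine Finset.sum_congr rfl fun v _ => ?_
  rw [← Finset.sum_filter, Finset.sum_const, ← card_neighborFinset_eq_degree,
    neighborFinset_eq_filter]
  simp only [adj_comm]

theorem IsTree.sum_degree (hT : G.IsTree) :
    ∑ v, (G.degree v : ℝ) = 2 * (Fintype.card V - 1) := by
  have h := hT.card_edgeFinset
  rw [← Nat.cast_sum, sum_degrees_eq_twice_card_edges, ← h]
  push_cast
  ring

theorem sum_neighborFinset_dist_self {M : Type*} [AddCommMonoid M] (w : V) (f : ℕ → M) :
    ∑ v ∈ G.neighborFinset w, f (G.dist v w) = G.degree w • f 1 := by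
  rw [Finset.sum_congr rfl fun v hv =>
    by rw [dist_eq_one_iff_adj.mpr ((mem_neighborFinset _ _ _).mp hv).symm],
    Finset.sum_const, card_neighborFinset_eq_degree]

theorem IsTree.sum_neighborFinset_dist [DecidableEq V] (hT : G.IsTree) (u w : V) :
    ∑ v ∈ G.neighborFinset u, (G.dist v w : ℝ) =
      G.degree u * G.dist u w + G.degree u - if u = w then 0 else 2 := by
  rcases eq_or_ne u w with rfl | huw
  · rw [sum_neighborFinset_dist_self u fun k => (k : ℝ)]
    simp
  · obtain ⟨c, hc, -⟩ := hT.exists_adj_dist_add_one_eq huw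
    have hd : 1 ≤ G.degree u := (G.degree_pos_iff_exists_adj u).mpr ⟨c, hc⟩
    have hD : 1 ≤ G.dist u w := hT.connected.pos_dist_of_ne huw
    rw [hT.sum_neighborFinset_dist_of_ne huw]
    push_cast [hd, hD, nsmul_eq_mul, huw]
    ring

theorem IsTree.sum_neighborFinset_dist_sq (hT : G.IsTree) (u w : V) :
    ∑ v ∈ G.neighborFinset u, (G.dist v w : ℝ) ^ 2 =
      G.degree u * G.dist u w ^ 2 + 2 * G.degree u * G.dist u w - 4 * G.dist u w + G.degree u := by
  rcases eq_or_ne u w with rfl | huw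
  · rw [sum_neighborFinset_dist_self u fun k => (k : ℝ) ^ 2]
    simp
  · obtain ⟨c, hc, -⟩ := hT.exists_adj_dist_add_one_eq huw
    have hd : 1 ≤ G.degree u := (G.degree_pos_iff_exists_adj u).mpr ⟨c, hc⟩
    have hD : 1 ≤ G.dist u w := hT.connected.pos_dist_of_ne huw
    rw [hT.sum_neighborFinset_dist_of_ne huw fun k => (k : ℝ) ^ 2]
    push_cast [hd, hD, nsmul_eq_mul, huw]
    ring

theorem IsTree.sum_degree_mul_dist (hT : G.IsTree) (w : V) :
    ∑ v, (G.degree v : ℝ) * G.dist v w =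
      2 * ∑ v, (G.dist v w : ℝ) - (Fintype.card V - 1) := by
  have h := sum_sum_neighborFinset (G := G) fun v => (G.dist v w : ℝ) ^ 2
  simp only [hT.sum_neighborFinset_dist_sq, Finset.sum_add_distrib, Finset.sum_sub_distrib,
    mul_assoc, ← Finset.mul_sum, nsmul_eq_mul, hT.sum_degree] at h
  linarith

end Fintype

theorem Connected.min_dist_two_add_eq [DecidableEq V] [DecidableRel G.Adj] (hG : G.Connected)
    (u v : V) :
    min (G.dist u v) 2 + (if G.Adj u v then 1 else 0) + (if u = v then 2 else 0) = 2 := by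
  by_cases huv : u = v
  · simp [huv]
  by_cases hadj : G.Adj u v
  · simp [huv, hadj, dist_eq_one_iff_adj.mpr hadj]
  · have := hG.one_lt_dist_of_ne_of_not_adj huv hadj
    simp only [huv, hadj, if_false]
    omega

theorem IsTree.sum_min_dist_two [Fintype V] (hT : G.IsTree) :
    ∑ u, ∑ v, min (G.dist u v) 2 = 2 * (Fintype.card V - 1) ^ 2 := by
  classical
  have h := Finset.sum_congr rfl fun u (_ : u ∈ Finset.univ) =>
    Finset.sum_congr rfl fun v (_ : v ∈ Finset.univ) => hT.connected.min_dist_two_add_eq u v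
  have hdeg : ∀ u, ∑ v, (if G.Adj u v then 1 else 0) = G.degree u := fun u => by
    rw [← Finset.card_filter, ← neighborFinset_eq_filter, card_neighborFinset_eq_degree]
  simp only [Finset.sum_add_distrib, hdeg, sum_degrees_eq_twice_card_edges, Finset.sum_ite_eq,
    Finset.mem_univ, if_true, Finset.sum_const, Finset.card_univ, smul_eq_mul] at h
  have : Nonempty V := hT.connected.nonempty
  obtain ⟨m, hm⟩ : ∃ m, Fintype.card V = m + 1 :=
    ⟨_, (Nat.succ_pred_eq_of_pos Fintype.card_pos).symm⟩
  have hE := hT.card_edgeFinset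
  rw [hm] at h hE ⊢
  rw [Nat.add_sub_cancel]
  nlinarith

theorem IsTree.two_mul_sq_le_sum_dist [Fintype V] (hT : G.IsTree) :
    2 * (Fintype.card V - 1) ^ 2 ≤ ∑ u, ∑ v, G.dist u v :=
  hT.sum_min_dist_two ▸ Finset.sum_le_sum fun _ _ => Finset.sum_le_sum fun _ _ => min_le_left _ _

theorem IsTree.sum_dist_eq_iff [Fintype V] (hT : G.IsTree) :
    ∑ u, ∑ v, G.dist u v = 2 * (Fintype.card V - 1) ^ 2 ↔ ∀ u v, G.dist u v ≤ 2 := by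
  rw [← hT.sum_min_dist_two, eq_comm, Finset.sum_eq_sum_iff_of_le fun _ _ =>
    Finset.sum_le_sum fun _ _ => min_le_left _ _]
  refine forall_congr' fun u => ?_
  rw [Finset.sum_eq_sum_iff_of_le fun _ _ => min_le_left _ _]
  simp

theorem IsUniversal.dist_le_two {c : V} (hc : G.IsUniversal c) (u v : V) : G.dist u v ≤ 2 := by
  have hc1 : ∀ x, G.dist c x ≤ 1 := fun x => by
    rcases eq_or_ne c x with rfl | h
    · simp
    · exact (dist_eq_one_iff_adj.mpr (hc h)).le
  have hu := hc1 u
  rw [dist_comm] at hu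
  have := (Connected.of_isUniversal hc).dist_triangle (u := u) (v := c) (w := v)
  have := hc1 v
  omega

theorem IsTree.dist_eq_length_of_isPath (hT : G.IsTree) {u v : V} {p : G.Walk u v}
    (hp : p.IsPath) : G.dist u v = p.length := by
  obtain ⟨q, hq, hlen⟩ := hT.connected.exists_path_of_dist u v
  have := (hT.isAcyclic.subsingleton_path u v).elim ⟨p, hp⟩ ⟨q, hq⟩
  rw [← hlen, show p = q from congrArg Subtype.val this]

theorem Connected.exists_adj_adj_of_dist_le_two (hG : G.Connected) {u v : V} (huv : u ≠ v)
    (hadj : ¬ G.Adj u v) (h : G.dist u v ≤ 2) : ∃ m, G.Adj u m ∧ G.Adj m v := by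
  have h2 : G.edist u v = 2 := by
    rw [← (hG u v).coe_dist_eq_edist, le_antisymm h (hG.one_lt_dist_of_ne_of_not_adj huv hadj)]
    rfl
  obtain ⟨m, hm⟩ := (edist_eq_two_iff.mp h2).2.2
  rw [mem_commonNeighbors] at hm
  exact ⟨m, hm.1, hm.2.symm⟩

theorem IsTree.exists_isUniversal_of_dist_le_two [Nonempty V] (hT : G.IsTree)
    (h : ∀ u v, G.dist u v ≤ 2) : ∃ c, G.IsUniversal c := by
  obtain ⟨x⟩ := ‹Nonempty V›
  by_cases hx : G.IsUniversal x
  · exact ⟨x, hx⟩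
  obtain ⟨y, hxy, hnxy⟩ : ∃ y, x ≠ y ∧ ¬ G.Adj x y := by simpa [IsUniversal] using hx
  obtain ⟨m, hxm, hmy⟩ := hT.connected.exists_adj_adj_of_dist_le_two hxy hnxy (h x y)
  refine ⟨m, fun z hmz => by_contra fun hnmz => ?_⟩
  obtain ⟨m', hmm', hm'z⟩ := hT.connected.exists_adj_adj_of_dist_le_two hmz hnmz (h m z)
  obtain ⟨a, ham, ham'⟩ : ∃ a, G.Adj a m ∧ a ≠ m' := by
    by_cases hxm' : x = m'
    · exact ⟨y, hmy.symm, fun h => hxy (hxm'.trans h.symm)⟩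
    · exact ⟨x, hxm, hxm'⟩
  have haz : a ≠ z := fun h => hnmz (h ▸ ham.symm)
  have hp : (Walk.cons ham (.cons hmm' (.cons hm'z .nil))).IsPath := by
    simp [Walk.cons_isPath_iff, ham.ne, ham', haz, hmm'.ne, hmz, hm'z.ne]
  have := hT.dist_eq_length_of_isPath hp
  have := h a z
  simp_all

theorem IsTree.eq_starGraph_of_isUniversal (hT : G.IsTree) {c : V} (hc : G.IsUniversal c) :
    G = starGraph c := by
  ext x y
  rw [starGraph_adj]
  refine ⟨fun hxy => ⟨hxy.ne, by_contra fun hne => ?_⟩, ?_⟩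
  · push Not at hne
    have hp : (Walk.cons (hc hne.1.symm).symm (.cons (hc hne.2.symm) .nil)).IsPath := by
      simp [Walk.cons_isPath_iff, hxy.ne, hne.1, hne.2.symm]
    have := hT.dist_eq_length_of_isPath hp
    simp [dist_eq_one_iff_adj.mpr hxy] at this
  · rintro ⟨hne, rfl | rfl⟩
    · exact hc hne
    · exact (hc hne.symm).symm

theorem nonempty_iso_starGraph [DecidableEq V] (r r' : V) :
    Nonempty (starGraph r ≃g starGraph r') :=
  ⟨⟨Equiv.swap r r', by simp [starGraph_adj, Equiv.swap_apply_eq_iff]⟩⟩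

theorem IsTree.nonempty_iso_starGraph_iff [DecidableEq V] (hT : G.IsTree) (r : V) :
    Nonempty (G ≃g starGraph r) ↔ ∀ u v, G.dist u v ≤ 2 := by
  refine ⟨fun ⟨f⟩ => IsUniversal.dist_le_two (c := f.symm r) fun w hw => ?_, fun h => ?_⟩
  · rw [← f.map_adj_iff, f.apply_symm_apply, starGraph_adj_center_iff]
    exact fun h => hw (f.symm_apply_eq.mpr h)
  · have : Nonempty V := ⟨r⟩
    obtain ⟨c, hc⟩ := hT.exists_isUniversal_of_dist_le_two h
    rw [hT.eq_starGraph_of_isUniversal hc]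
    exact nonempty_iso_starGraph c r

end SimpleGraph

section

variable {n : ℕ}

theorem degG_eq_degree (G : SimpleGraph (Fin n)) (u : Fin n) : degG G u = G.degree u := by
  simp [degG, adjW, ← SimpleGraph.card_neighborFinset_eq_degree,
    SimpleGraph.neighborFinset_eq_filter]

theorem lapG_mulVec_apply (G : SimpleGraph (Fin n)) (x : Fin n → ℝ) (u : Fin n) :
    (lapG G *ᵥ x) u = degG G u * x u - ∑ v ∈ G.neighborFinset u, x v := by
  simp [lapG, mulVec, dotProduct, sub_mul, ite_mul, adjW, SimpleGraph.neighborFinset_eq_filter,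
    Finset.sum_filter]

theorem lapG_mulVec_one (G : SimpleGraph (Fin n)) : lapG G *ᵥ 1 = 0 := by
  ext u
  simp [lapG_mulVec_apply, degG_eq_degree]

theorem isSymm_lapG (G : SimpleGraph (Fin n)) : (lapG G).IsSymm := by
  ext u v
  by_cases h : u = v
  · subst h; rfl
  · simp [lapG, adjW, SimpleGraph.adj_comm, h, Ne.symm h]

theorem nlapG_eq (G : SimpleGraph (Fin n)) :
    nlapG G =
      diagonal (fun u => (√(degG G u))⁻¹) * lapG G * diagonal (fun u => (√(degG G u))⁻¹) := by
  ext u v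
  simp only [nlapG, of_apply, diagonal_mul, mul_diagonal, div_eq_mul_inv, mul_inv]
  ring

theorem isHermitian_nlapG (G : SimpleGraph (Fin n)) : (nlapG G).IsHermitian := by
  rw [IsHermitian, conjTranspose_eq_transpose_of_trivial, nlapG_eq, transpose_mul, transpose_mul,
    diagonal_transpose, (isSymm_lapG G).eq, Matrix.mul_assoc]

theorem nlapG_mulVec_sqrt_degG {G : SimpleGraph (Fin n)} (hd : ∀ u, 0 < degG G u) :
    nlapG G *ᵥ (fun u => √(degG G u)) = 0 := by
  have h : diagonal (fun u => (√(degG G u))⁻¹) *ᵥ (fun u => √(degG G u)) = 1 := by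
    ext u
    simp [mulVec_diagonal, (Real.sqrt_pos.mpr (hd u)).ne']
  rw [nlapG_eq, ← mulVec_mulVec, ← mulVec_mulVec, h, lapG_mulVec_one, mulVec_zero]

theorem sumInvEig_nlapG_eq_trace {G : SimpleGraph (Fin n)} (hd : ∀ u, 0 < degG G u)
    {N : Matrix (Fin n) (Fin n) ℝ}
    (hN : lapG G * N = 1 - (∑ u, degG G u)⁻¹ • vecMulVec (degG G) 1) :
    sumInvEig (nlapG G) = trace (N * (diagonal (degG G) -
      (∑ u, degG G u)⁻¹ • vecMulVec (degG G) (degG G))) := by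
  set vol := ∑ u, degG G u
  set r : Fin n → ℝ := fun u => √(degG G u)
  have hr : ∀ u, r u * r u = degG G u := fun u => Real.mul_self_sqrt (hd u).le
  have hr0 : ∀ u, r u ≠ 0 := fun u => (Real.sqrt_pos.mpr (hd u)).ne'
  set S := diagonal r
  set S' := diagonal fun u => (r u)⁻¹
  have hS'S : S' * S = 1 := by simp [S, S', diagonal_mul_diagonal, hr0]
  have hS'd : S' *ᵥ degG G = r := by ext u; simp [S', mulVec_diagonal, ← hr u, hr0]
  have h1S : 1 ᵥ* S = r := by ext u; simp [S, vecMul_diagonal]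
  have hSr : S *ᵥ r = degG G := by ext u; simp [S, mulVec_diagonal, hr]
  have hrS : r ᵥ* S = degG G := by ext u; simp [S, vecMul_diagonal, hr]
  have hSS : S * S = diagonal (degG G) := by simp [S, diagonal_mul_diagonal, hr]
  set φ := (√vol)⁻¹ • r
  have hφφ : vecMulVec φ φ = vol⁻¹ • vecMulVec r r := by
    rw [smul_vecMulVec, vecMulVec_smul, smul_smul, ← mul_inv,
      Real.mul_self_sqrt (Finset.sum_nonneg fun u _ => (hd u).le)]
  have hφ : nlapG G *ᵥ φ = 0 := by rw [mulVec_smul, nlapG_mulVec_sqrt_degG hd, smul_zero]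
  have hAM : nlapG G * (S * N * S) = 1 - vecMulVec φ φ := by
    have : nlapG G * (S * N * S) = S' * (lapG G * N) * S := by
      rw [nlapG_eq]
      simp only [Matrix.mul_assoc]
      rw [← Matrix.mul_assoc S' S, hS'S, Matrix.one_mul]
    rw [this, hN, Matrix.mul_sub, Matrix.sub_mul, Matrix.mul_one, hS'S, Matrix.mul_smul,
      Matrix.smul_mul, mul_vecMulVec, vecMulVec_mul, hS'd, h1S, hφφ]
  rw [sumInvEig, dif_pos (isHermitian_nlapG G),
    (isHermitian_nlapG G).sum_inv_eigenvalues_eq_trace hφ hAM,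
    show S * N * S * (1 - vecMulVec φ φ) = S * (N * S * (1 - vecMulVec φ φ)) by
      simp only [Matrix.mul_assoc],
    trace_mul_comm, Matrix.mul_assoc, Matrix.mul_assoc, ← Matrix.mul_assoc S]
  congr 2
  rw [hφφ, Matrix.mul_sub, Matrix.sub_mul, Matrix.mul_one, hSS, Matrix.mul_smul, Matrix.smul_mul,
    mul_vecMulVec, vecMulVec_mul, hSr, hrS]

namespace SimpleGraph

def distMatrix {V : Type*} (G : SimpleGraph V) : Matrix V V ℝ := of fun u v => G.dist u v

namespace IsTree

variable {G : SimpleGraph (Fin n)}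

theorem degG_pos (hT : G.IsTree) (hn : 2 ≤ n) (u : Fin n) : 0 < degG G u := by
  have : Nontrivial (Fin n) := Fin.nontrivial_iff_two_le.mpr hn
  have h := G.minDegree_le_degree u
  rw [hT.minDegree_eq_one_of_nontrivial] at h
  rw [degG_eq_degree]
  exact_mod_cast h

theorem sum_degG (hT : G.IsTree) : ∑ u, degG G u = 2 * (n - 1) := by
  simpa [degG_eq_degree] using hT.sum_degree

theorem lapG_mul_distMatrix (hT : G.IsTree) :
    lapG G * G.distMatrix = of fun u w => (if u = w then 0 else 2) - degG G u := by
  ext u w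
  change (lapG G *ᵥ fun v => (G.dist v w : ℝ)) u = _
  rw [of_apply, lapG_mulVec_apply, hT.sum_neighborFinset_dist, degG_eq_degree]
  ring

theorem distMatrix_mulVec_degG (hT : G.IsTree) :
    G.distMatrix *ᵥ degG G = 2 • G.distMatrix *ᵥ 1 - fun _ => ((n : ℝ) - 1) := by
  ext u
  have h := hT.sum_degree_mul_dist u
  simp only [Fintype.card_fin, ← degG_eq_degree] at h
  simp [distMatrix, mulVec, dotProduct, dist_comm (u := u), mul_comm, h]

theorem lapG_mul_generalizedInverse (hT : G.IsTree) (hn : 2 ≤ n) :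
    lapG G *
        ((∑ u, degG G u)⁻¹ • vecMulVec (G.distMatrix *ᵥ 1) 1 - (2 : ℝ)⁻¹ • G.distMatrix) =
      1 - (∑ u, degG G u)⁻¹ • vecMulVec (degG G) 1 := by
  have hn1 : (n : ℝ) - 1 ≠ 0 := by
    have : (2 : ℝ) ≤ n := by exact_mod_cast hn
    linarith
  have hrow : (lapG G * G.distMatrix) *ᵥ 1 = fun u => 2 * (n - 1) - n * degG G u := by
    ext u
    have h : ∀ w, (if u = w then (0 : ℝ) else 2) = 2 - if u = w then 2 else 0 := fun w => by
      split_ifs <;> ring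
    rw [hT.lapG_mul_distMatrix]
    simp [mulVec, dotProduct, h, Finset.sum_sub_distrib]
    ring
  rw [Matrix.mul_sub, Matrix.mul_smul, Matrix.mul_smul, mul_vecMulVec, mulVec_mulVec, hrow,
    hT.lapG_mul_distMatrix, hT.sum_degG]
  ext u w
  by_cases h : u = w <;> simp [one_apply, h] <;> field_simp <;> ring

theorem sumInvEig_nlapG (hT : G.IsTree) (hn : 2 ≤ n) :
    sumInvEig (nlapG G) = ((∑ u, ∑ v, G.dist u v : ℕ) : ℝ) / (n - 1) - (2 * n - 1) / 2 := by
  have hn1 : (n : ℝ) - 1 ≠ 0 := by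
    have : (2 : ℝ) ≤ n := by exact_mod_cast hn
    linarith
  set vol := ∑ u, degG G u
  have hvol : vol = 2 * (n - 1) := hT.sum_degG
  set N := vol⁻¹ • vecMulVec (G.distMatrix *ᵥ 1) 1 - (2 : ℝ)⁻¹ • G.distMatrix
  have hNd : N *ᵥ degG G = fun _ => ((n : ℝ) - 1) / 2 := by
    rw [sub_mulVec, smul_mulVec, smul_mulVec, vecMulVec_mulVec, hT.distMatrix_mulVec_degG]
    have h1d : 1 ⬝ᵥ degG G = 2 * (n - 1) := by rw [one_dotProduct]; exact hvol
    ext u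
    simp [hvol, h1d]
    field_simp
    ring
  have htr : (N * diagonal (degG G)).trace = vol⁻¹ * ∑ w, ∑ v, degG G v * G.dist v w := by
    simp [N, distMatrix, trace, mul_diagonal, mulVec, dotProduct, Finset.mul_sum, Finset.sum_mul]
    rw [Finset.sum_comm]
    exact Finset.sum_congr rfl fun _ _ => Finset.sum_congr rfl fun _ _ => by ring
  have hdeg : ∀ w, ∑ v, degG G v * G.dist v w = 2 * ∑ v, (G.dist v w : ℝ) - (n - 1) := by
    simpa [degG_eq_degree] using hT.sum_degree_mul_dist
  rw [sumInvEig_nlapG_eq_trace (hT.degG_pos hn) (hT.lapG_mul_generalizedInverse hn), Matrix.mul_sub, trace_sub,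
    Matrix.mul_smul, trace_smul, mul_vecMulVec, trace_vecMulVec, hNd, htr,
    Finset.sum_congr rfl fun w _ => hdeg w, Finset.sum_sub_distrib, ← Finset.mul_sum,
    Finset.sum_comm, hvol]
  simp only [dotProduct, ← Finset.mul_sum, hT.sum_degG, Finset.sum_const, Finset.card_univ,
    Fintype.card_fin, nsmul_eq_mul, smul_eq_mul]
  push_cast
  field_simp
  ring

end IsTree

end SimpleGraph

theorem starGraph_eq (hn : 0 < n) : starGraph n = SimpleGraph.starGraph ⟨0, hn⟩ := by
  ext u v
  simp [starGraph, SimpleGraph.starGraph_adj, Fin.ext_iff]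

end

theorem stmt3 {n : ℕ} (hn : 2 ≤ n) (T : SimpleGraph (Fin n)) (hT : T.IsTree) :
    sumInvEig (nlapG (starGraph n)) ≤ sumInvEig (nlapG T) ∧
    (sumInvEig (nlapG T) = sumInvEig (nlapG (starGraph n)) ↔
      Nonempty (T ≃g starGraph n)) := by
  have hS := starGraph_eq (show 0 < n by omega)
  have hStree : (starGraph n).IsTree := hS ▸ SimpleGraph.isTree_starGraph _
  have hWS := hStree.sum_dist_eq_iff.mpr
    (hS ▸ SimpleGraph.isUniversal_starGraph_self.dist_le_two)
  have hWT := hT.two_mul_sq_le_sum_dist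
  have hn1 : (0 : ℝ) < n - 1 := by
    have : (2 : ℝ) ≤ n := by exact_mod_cast hn
    linarith
  rw [hT.sumInvEig_nlapG hn, hStree.sumInvEig_nlapG hn, hS, hT.nonempty_iso_starGraph_iff,
    ← hT.sum_dist_eq_iff, ← hS, hWS, sub_left_inj, div_left_inj' hn1.ne', Nat.cast_inj,
    sub_le_sub_iff_right]
  exact ⟨div_le_div_of_nonneg_right (by exact_mod_cast hWT) hn1.le, Iff.rfl⟩
end
end

section
/- Let T be a weighted tree on n vertices with positive edge weights, and let 0 = λ_0 < λ_1 ≤ ⋯ ≤ λ_{n−1} be the eigenvalues of its combinatorial Laplacian. Then Σ_{i=1}^{n−1} λ_i^{−1} = (1/n) · Σ_{e ∈ E(T)} |T_1(e)|·|T_2(e)| / ω(e), where for each edge e, T_1(e) and T_2(e) denote the two connected components of T with e deleted. -/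
open scoped Classical

noncomputable section

/-!
For a tree `T`, let `R u v = Σ 1/ω(e)`, summed over the edges `e` separating `u` from `v` (the
resistance distance). Stepping from `u` to a neighbour `x` changes `R u v` by `±1/ω(ux)`, with
the sign `+` for exactly one neighbour when `u ≠ v`, so `L R = (2 - deg) 1ᵀ - 2 I` and `-R/2`
inverts `L` on vectors of zero sum. As the kernel of `L` is spanned by `1`, the centred matrix
`Q (-R/2) Q`, with `Q = I - J/n`, acts on every eigenvector of `L` as `λ⁻¹` (as `0` on the
kernel), so its trace is `Σ λᵢ⁻¹`. Since `trace R = 0`, that trace is `(1/2n) Σ_{u,v} R u v`,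
and an edge `e` separates exactly `2 |T₁(e)| |T₂(e)|` ordered pairs of vertices.
-/

lemma eq_zero_of_forall_eq_of_sum_eq_zero {ι : Type*} [Fintype ι] {g : ι → ℝ}
    (hconst : ∀ i j, g i = g j) (hsum : ∑ i, g i = 0) : g = 0 := by
  funext k
  have : Nonempty ι := ⟨k⟩
  have hcard : (Fintype.card ι : ℝ) * g k = 0 := by
    rw [← hsum, Finset.sum_congr rfl fun i _ => hconst i k, Finset.sum_const,
      Finset.card_univ, nsmul_eq_mul]
  exact (mul_eq_zero.mp hcard).resolve_left (Nat.cast_ne_zero.mpr Fintype.card_ne_zero)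

namespace Matrix

variable {ι : Type*} [Fintype ι] [DecidableEq ι]

theorem trace_eq_sum_of_mulVec_eq_smul {𝕜 : Type*} [RCLike 𝕜] (A : Matrix ι ι 𝕜)
    (b : OrthonormalBasis ι 𝕜 (EuclideanSpace 𝕜 ι)) (μ : ι → 𝕜)
    (h : ∀ i, A *ᵥ ⇑(b i) = μ i • ⇑(b i)) : A.trace = ∑ i, μ i := by
  rw [← trace_toLin_eq A (EuclideanSpace.basisFun ι 𝕜).toBasis,
    ← toEuclideanLin_eq_toLin_orthonormal, LinearMap.trace_eq_sum_inner _ b]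
  refine Finset.sum_congr rfl fun i _ => ?_
  have : toEuclideanLin A (b i) = μ i • b i := by
    rw [toLpLin_apply, h i]; rfl
  rw [this, inner_smul_right, inner_self_eq_one_of_norm_eq_one (b.orthonormal.1 i), mul_one]

theorem IsHermitian.mulVec_eigenvectorBasis_eq_inv_smul {L Y : Matrix ι ι ℝ}
    (hL : L.IsHermitian) (hL1 : L *ᵥ 1 = 0) (hker : ∀ f, L *ᵥ f = 0 → ∀ i j, f i = f j)
    (hY1 : Y *ᵥ 1 = 0) (hYsum : ∀ f, ∑ i, (Y *ᵥ f) i = 0)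
    (hLY : ∀ f, ∑ i, f i = 0 → L *ᵥ (Y *ᵥ f) = f) (k : ι) :
    Y *ᵥ ⇑(hL.eigenvectorBasis k) = (hL.eigenvalues k)⁻¹ • ⇑(hL.eigenvectorBasis k) := by
  set v : ι → ℝ := ⇑(hL.eigenvectorBasis k)
  set μ := hL.eigenvalues k
  have hv : L *ᵥ v = μ • v := hL.mulVec_eigenvectorBasis k
  by_cases hμ : μ = 0
  · have hconst := hker v (by rw [hv, hμ, zero_smul])
    have hv1 : v = v k • 1 := funext fun i => by simp [hconst i k]
    rw [hμ, _root_.inv_zero, zero_smul, hv1, mulVec_smul, hY1, smul_zero]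
  -- `1ᵀ L = 0`, so an eigenvector for a nonzero eigenvalue is orthogonal to the constants
  have hvsum : ∑ i, v i = 0 := by
    have h : μ * ∑ i, v i = 0 := by
      rw [← one_dotProduct, ← smul_eq_mul, ← dotProduct_smul, ← hv, dotProduct_mulVec,
        ← mulVec_transpose, (isHermitian_iff_isSymm.mp hL).eq, hL1, zero_dotProduct]
    exact (mul_eq_zero.mp h).resolve_left hμ
  set g := Y *ᵥ v - μ⁻¹ • v
  have hLg : L *ᵥ g = 0 := by
    rw [mulVec_sub, hLY v hvsum, mulVec_smul, hv, smul_smul, inv_mul_cancel₀ hμ, one_smul,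
      sub_self]
  have hgsum : ∑ i, g i = 0 := by
    simp only [g, Pi.sub_apply, Pi.smul_apply, smul_eq_mul, Finset.sum_sub_distrib,
      ← Finset.mul_sum, hYsum, hvsum, mul_zero, sub_zero]
  exact sub_eq_zero.mp (eq_zero_of_forall_eq_of_sum_eq_zero (hker g hLg) hgsum)

variable (ι) in
def centeringMatrix : Matrix ι ι ℝ := 1 - (Fintype.card ι : ℝ)⁻¹ • of fun _ _ => 1

lemma centeringMatrix_mulVec (f : ι → ℝ) :
    centeringMatrix ι *ᵥ f = f - ((Fintype.card ι : ℝ)⁻¹ * ∑ i, f i) • 1 := by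
  funext i
  simp [centeringMatrix, mulVec, dotProduct, sub_mul, Finset.sum_sub_distrib, one_apply,
    Finset.mul_sum]

lemma centeringMatrix_mulVec_one : centeringMatrix ι *ᵥ 1 = 0 := by
  funext i
  have : Nonempty ι := ⟨i⟩
  simp [centeringMatrix_mulVec]

lemma sum_centeringMatrix_mulVec (f : ι → ℝ) : ∑ i, (centeringMatrix ι *ᵥ f) i = 0 := by
  rcases isEmpty_or_nonempty ι with hι | hι
  · simp
  · simp [centeringMatrix_mulVec, Finset.sum_sub_distrib]

lemma centeringMatrix_mulVec_of_sum_eq_zero {f : ι → ℝ} (hf : ∑ i, f i = 0) :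
    centeringMatrix ι *ᵥ f = f := by
  simp [centeringMatrix_mulVec, hf]

lemma centeringMatrix_mul_self : centeringMatrix ι * centeringMatrix ι = centeringMatrix ι :=
  ext_iff_mulVec.mpr fun f => by
    rw [← mulVec_mulVec, centeringMatrix_mulVec_of_sum_eq_zero (sum_centeringMatrix_mulVec f)]

lemma trace_centeringMatrix_mul_mul_centeringMatrix (X : Matrix ι ι ℝ) :
    (centeringMatrix ι * X * centeringMatrix ι).trace
      = X.trace - (Fintype.card ι : ℝ)⁻¹ * ∑ i, ∑ j, X i j := by
  rw [trace_mul_comm, ← Matrix.mul_assoc, centeringMatrix_mul_self, centeringMatrix,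
    Matrix.sub_mul, Matrix.one_mul, trace_sub, Matrix.smul_mul, trace_smul, smul_eq_mul]
  congr 2
  simp only [trace, diag, mul_apply, of_apply, one_mul]
  exact Finset.sum_comm

theorem IsHermitian.sum_inv_eigenvalues_eq {L X : Matrix ι ι ℝ} (hL : L.IsHermitian)
    (hL1 : L *ᵥ 1 = 0) (hker : ∀ f, L *ᵥ f = 0 → ∀ i j, f i = f j)
    (hLX : ∀ f, ∑ i, f i = 0 → L *ᵥ (X *ᵥ f) = f) :
    ∑ i, (hL.eigenvalues i)⁻¹ =
      X.trace - (Fintype.card ι : ℝ)⁻¹ * ∑ i, ∑ j, X i j := by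
  set Q := centeringMatrix ι
  have hLQ : ∀ f, L *ᵥ (Q *ᵥ f) = L *ᵥ f := fun f => by
    rw [centeringMatrix_mulVec, mulVec_sub, mulVec_smul, hL1, smul_zero, sub_zero]
  rw [← trace_centeringMatrix_mul_mul_centeringMatrix]
  refine (trace_eq_sum_of_mulVec_eq_smul _ hL.eigenvectorBasis _ fun k => ?_).symm
  refine hL.mulVec_eigenvectorBasis_eq_inv_smul hL1 hker ?_ (fun f => ?_) (fun f hf => ?_) k
  · rw [← mulVec_mulVec, centeringMatrix_mulVec_one, mulVec_zero]
  · rw [← mulVec_mulVec, ← mulVec_mulVec]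
    exact sum_centeringMatrix_mulVec _
  · rw [← mulVec_mulVec, ← mulVec_mulVec, hLQ, centeringMatrix_mulVec_of_sum_eq_zero hf,
      hLX f hf]

end Matrix

namespace SimpleGraph

variable {V : Type*} {G : SimpleGraph V} {a b : V}

lemma Walk.reachable_deleteEdges_or :
    ∀ {v : V}, G.Walk v a →
      (G.deleteEdges {s(a, b)}).Reachable v a ∨ (G.deleteEdges {s(a, b)}).Reachable v b
  | _, .nil => .inl .rfl
  | v, .cons (v := w) h q => by
    by_cases he : s(v, w) = s(a, b)
    · rcases Sym2.eq_iff.mp he with ⟨rfl, -⟩ | ⟨rfl, -⟩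
      · exact .inl .rfl
      · exact .inr .rfl
    · have hvw : (G.deleteEdges {s(a, b)}).Adj v w := by simp [h, he]
      exact (reachable_deleteEdges_or q).imp hvw.reachable.trans hvw.reachable.trans

lemma reachable_deleteEdges_iff_of_adj {e : Sym2 V} {u x : V} (hux : G.Adj u x)
    (he : e ≠ s(u, x)) (v : V) :
    (G.deleteEdges {e}).Reachable u v ↔ (G.deleteEdges {e}).Reachable x v := by
  have hux' : (G.deleteEdges {e}).Reachable u x :=
    Adj.reachable (by simpa [hux] using Ne.symm he)
  exact ⟨hux'.symm.trans, hux'.trans⟩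

namespace IsTree

variable (hT : G.IsTree) (hab : G.Adj a b)
include hT hab

lemma reachable_deleteEdges_right_iff (v : V) :
    (G.deleteEdges {s(a, b)}).Reachable b v ↔ ¬ (G.deleteEdges {s(a, b)}).Reachable a v := by
  have hbridge : ¬ (G.deleteEdges {s(a, b)}).Reachable a b :=
    isBridge_iff.mp (isAcyclic_iff_forall_adj_isBridge.mp hT.isAcyclic hab)
  refine ⟨fun hb ha => hbridge (ha.trans hb.symm), fun ha => ?_⟩
  obtain ⟨p⟩ := hT.connected.preconnected v a
  exact (p.reachable_deleteEdges_or.resolve_left fun h => ha h.symm).symm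

lemma reachable_deleteEdges_iff (u v : V) :
    (G.deleteEdges {s(a, b)}).Reachable u v ↔
      ((G.deleteEdges {s(a, b)}).Reachable a u ↔ (G.deleteEdges {s(a, b)}).Reachable a v) := by
  by_cases hu : (G.deleteEdges {s(a, b)}).Reachable a u
  · simpa [hu] using ⟨hu.trans, hu.symm.trans⟩
  · have hbu := (hT.reachable_deleteEdges_right_iff hab u).mpr hu
    simp only [hu, false_iff, ← hT.reachable_deleteEdges_right_iff hab v]
    exact ⟨hbu.trans, hbu.symm.trans⟩

end IsTree

lemma IsTree.existsUnique_adj_not_reachable_deleteEdges (hT : G.IsTree) {u v : V}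
    (huv : u ≠ v) :
    ∃! x, G.Adj u x ∧ ¬ (G.deleteEdges {s(u, x)}).Reachable u v := by
  obtain ⟨p, hp, -⟩ := hT.existsUnique_path u v
  obtain ⟨x, hux, q, rfl⟩ := Walk.exists_eq_cons_of_ne huv p
  rw [Walk.cons_isPath_iff] at hp
  refine ⟨x, ⟨hux, fun h => ?_⟩, fun y ⟨huy, hy⟩ => ?_⟩
  · have hxv : (G.deleteEdges {s(u, x)}).Reachable x v :=
      reachable_deleteEdges_iff_exists_walk.mpr
        ⟨q, fun hq => hp.2 (q.fst_mem_support_of_mem_edges hq)⟩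
    exact ((hT.reachable_deleteEdges_right_iff hux v).mp hxv) h
  · have hmem := (Walk.cons hux q).mem_edges_of_not_reachable_deleteEdges hy
    rcases List.mem_cons.mp (Walk.edges_cons .. ▸ hmem) with h | h
    · rcases Sym2.eq_iff.mp h with ⟨-, rfl⟩ | ⟨-, rfl⟩
      · rfl
      · exact absurd huy G.irrefl
    · exact absurd (q.fst_mem_support_of_mem_edges h) hp.2

end SimpleGraph

open Finset in
lemma Finset.card_filter_not_mem_iff_mem {α : Type*} [Fintype α] [DecidableEq α]
    (s : Finset α) : #{p : α × α | ¬(p.1 ∈ s ↔ p.2 ∈ s)} = 2 * #s * #sᶜ := by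
  have hsplit : ({p : α × α | ¬(p.1 ∈ s ↔ p.2 ∈ s)} : Finset (α × α)) =
      s ×ˢ sᶜ ∪ sᶜ ×ˢ s := by
    ext p
    simp only [mem_filter, mem_univ, true_and, mem_union, mem_product, mem_compl]
    tauto
  rw [hsplit, card_union_of_disjoint, card_product, card_product]
  · ring
  · exact disjoint_left.mpr fun p hp hp' => (mem_compl.mp (mem_product.mp hp').1)
      (mem_product.mp hp).1

namespace WGraph

open SimpleGraph Matrix Finset

variable {n : ℕ}

section

variable (T : WGraph n)

lemma w_nonneg (u v : Fin n) : 0 ≤ T.w u v := by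
  by_cases h : T.G.Adj u v
  · exact (T.pos u v h).le
  · exact (T.zero u v h).ge

lemma lap_isHermitian : T.lap.IsHermitian := by
  refine isHermitian_iff_isSymm.mpr (IsSymm.ext fun u v => ?_)
  simp only [lap, of_apply, T.symm v u, eq_comm (a := v)]
  split_ifs with h <;> simp [h]

lemma lap_mulVec_apply (f : Fin n → ℝ) (u : Fin n) :
    (T.lap *ᵥ f) u = ∑ x, T.w u x * (f u - f x) := by
  simp [lap, mulVec, dotProduct, sub_mul, sum_sub_distrib, deg, sum_mul,
    mul_sub]

lemma lap_mulVec_one : T.lap *ᵥ 1 = 0 := by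
  funext u
  simp [lap_mulVec_apply]

lemma eq_of_lap_mulVec_eq_zero (hC : T.G.Connected) {f : Fin n → ℝ} (hf : T.lap *ᵥ f = 0)
    (u v : Fin n) : f u = f v := by
  have : Nonempty (Fin n) := hC.nonempty
  obtain ⟨m, -, hmax⟩ := exists_max_image univ f univ_nonempty
  -- maximum principle: the maximum of `f` propagates along edges
  have hstep : ∀ x y, T.G.Adj x y → f x = f m → f y = f m := by
    intro x y hxy hx
    have hterms : ∀ z ∈ univ, 0 ≤ T.w x z * (f x - f z) := fun z _ =>
      mul_nonneg (T.w_nonneg x z) (by rw [hx]; linarith [hmax z (mem_univ z)])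
    have hsum : ∑ z, T.w x z * (f x - f z) = 0 := by
      rw [← lap_mulVec_apply, hf, Pi.zero_apply]
    have hy := (sum_eq_zero_iff_of_nonneg hterms).mp hsum y (mem_univ y)
    rcases mul_eq_zero.mp hy with h | h
    · exact absurd h (T.pos x y hxy).ne'
    · linarith
  have hwalk : ∀ {x y} (_ : T.G.Walk x y), f x = f m → f y = f m := by
    intro x y p
    induction p with
    | nil => exact id
    | cons h _ ih => exact fun hx => ih (hstep _ _ h hx)
  have hall : ∀ z, f z = f m := fun z => (hC.preconnected m z).elim fun p => hwalk p rfl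
  rw [hall u, hall v]

def resistance : Matrix (Fin n) (Fin n) ℝ :=
  of fun u v => ∑ e ∈ T.G.edgeFinset with ¬ (T.G.deleteEdges {e}).Reachable u v, (T.ew e)⁻¹

lemma resistance_apply (u v : Fin n) :
    T.resistance u v = ∑ e ∈ T.G.edgeFinset,
      if ¬ (T.G.deleteEdges {e}).Reachable u v then (T.ew e)⁻¹ else 0 := by
  rw [resistance, of_apply, sum_filter]

lemma resistance_self (u : Fin n) : T.resistance u u = 0 := by
  simp [resistance_apply]

end

variable {T : WGraph n}

lemma resistance_sub_resistance_of_adj (hT : T.G.IsTree) {u x : Fin n} (hux : T.G.Adj u x)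
    (v : Fin n) :
    T.resistance u v - T.resistance x v =
      (if (T.G.deleteEdges {s(u, x)}).Reachable u v then -1 else 1) * (T.w u x)⁻¹ := by
  rw [resistance_apply, resistance_apply, ← sum_sub_distrib,
    sum_eq_single_of_mem s(u, x) (mem_edgeFinset.mpr hux)]
  · simp only [hT.reachable_deleteEdges_right_iff hux v]
    split_ifs <;> simp [ew]
  · intro e _ he
    simp only [reachable_deleteEdges_iff_of_adj hux he, sub_self]

lemma sum_weight_mul_resistance_sub (hT : T.G.IsTree) (u v : Fin n) :
    ∑ x, T.w u x * (T.resistance u v - T.resistance x v) =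
      2 - #{x | T.G.Adj u x} - if u = v then 2 else 0 := by
  have hterm : ∀ x, T.w u x * (T.resistance u v - T.resistance x v) =
      (if T.G.Adj u x ∧ ¬ (T.G.deleteEdges {s(u, x)}).Reachable u v then 2 else 0) -
        if T.G.Adj u x then 1 else 0 := by
    intro x
    by_cases hux : T.G.Adj u x
    · rw [resistance_sub_resistance_of_adj hT hux, mul_comm, mul_assoc,
        inv_mul_cancel₀ (T.pos u x hux).ne']
      simp only [hux, true_and, if_true]
      split_ifs <;> norm_num
    · simp [hux, T.zero u x hux]
  rw [sum_congr rfl fun x _ => hterm x, sum_sub_distrib, sum_boole]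
  by_cases huv : u = v
  · subst huv
    simp
  · obtain ⟨x₀, hx₀, huniq⟩ := hT.existsUnique_adj_not_reachable_deleteEdges huv
    rw [sum_eq_single x₀ (fun x _ hx => if_neg fun h => hx (huniq x h)) (by simp),
      if_pos hx₀, if_neg huv]
    ring

lemma lap_mulVec_resistance_mulVec (hT : T.G.IsTree) {f : Fin n → ℝ} (hf : ∑ v, f v = 0) :
    T.lap *ᵥ (T.resistance *ᵥ f) = (-2 : ℝ) • f := by
  funext u
  calc (T.lap *ᵥ (T.resistance *ᵥ f)) u
      = ∑ v, f v * ∑ x, T.w u x * (T.resistance u v - T.resistance x v) := by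
        rw [lap_mulVec_apply]
        simp only [mulVec, dotProduct, ← sum_sub_distrib, mul_sum]
        rw [sum_comm]
        exact sum_congr rfl fun _ _ => sum_congr rfl fun _ _ => by ring
    _ = ∑ v, f v * (2 - #{x | T.G.Adj u x} - if u = v then 2 else 0) := by
        simp only [sum_weight_mul_resistance_sub hT]
    _ = ((-2 : ℝ) • f) u := by
        simp only [mul_sub, sum_sub_distrib, ← sum_mul, hf, mul_ite, mul_zero,
          sum_ite_eq, mem_univ, if_true, Pi.smul_apply, smul_eq_mul]
        ring

lemma SVal_deleteEdges (hT : T.G.IsTree) {a b : Fin n} (hab : T.G.Adj a b) :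
    SVal (T.G.deleteEdges {s(a, b)}) =
      #{u | (T.G.deleteEdges {s(a, b)}).Reachable a u} *
        #({u | (T.G.deleteEdges {s(a, b)}).Reachable a u} : Finset (Fin n))ᶜ := by
  set H := T.G.deleteEdges {s(a, b)}
  have hsupp_b :
      (H.connectedComponentMk b).supp = ↑({u | H.Reachable a u} : Finset (Fin n))ᶜ := by
    ext u
    simp [ConnectedComponent.mem_supp_iff, ConnectedComponent.eq, reachable_comm (u := u),
      hT.reachable_deleteEdges_right_iff hab, H]
  have hsupp_a : (H.connectedComponentMk a).supp = ↑({u | H.Reachable a u} : Finset _) := by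
    ext u
    simp [ConnectedComponent.mem_supp_iff, ConnectedComponent.eq, reachable_comm (u := u)]
  have hab' : H.connectedComponentMk a ≠ H.connectedComponentMk b := by
    rw [Ne, ConnectedComponent.eq]
    exact fun h => (hT.reachable_deleteEdges_right_iff hab a).mp h.symm .rfl
  have huniv : (Set.univ : Set H.ConnectedComponent) =
      {H.connectedComponentMk a, H.connectedComponentMk b} := by
    refine (Set.eq_univ_of_forall fun c => ?_).symm
    induction c using ConnectedComponent.ind with | h u => ?_
    by_cases hu : H.Reachable a u
    · exact .inl (ConnectedComponent.sound hu.symm)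
    · exact .inr (ConnectedComponent.sound
        ((hT.reachable_deleteEdges_right_iff hab u).mpr hu).symm)
  rw [SVal, ← finprod_mem_univ, huniv, finprod_mem_pair hab', Nat.card_coe_set_eq,
    Nat.card_coe_set_eq, hsupp_a, hsupp_b, Set.ncard_coe_finset, Set.ncard_coe_finset]

lemma card_not_reachable_deleteEdges (hT : T.G.IsTree) {e : Sym2 (Fin n)}
    (he : e ∈ T.G.edgeSet) :
    (#{p : Fin n × Fin n | ¬ (T.G.deleteEdges {e}).Reachable p.1 p.2} : ℝ) =
      2 * SVal (T.G.deleteEdges {e}) := by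
  induction e using Sym2.ind with
  | _ a b =>
    set A : Finset (Fin n) := {u | (T.G.deleteEdges {s(a, b)}).Reachable a u}
    have hpairs :
        ({p | ¬ (T.G.deleteEdges {s(a, b)}).Reachable p.1 p.2} : Finset (Fin n × Fin n)) =
          ({p | ¬(p.1 ∈ A ↔ p.2 ∈ A)} : Finset (Fin n × Fin n)) :=
      filter_congr fun p _ => by
        rw [hT.reachable_deleteEdges_iff he]
        simp [A]
    rw [hpairs, card_filter_not_mem_iff_mem, SVal_deleteEdges hT he]
    push_cast
    ring

lemma sum_resistance (hT : T.G.IsTree) :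
    ∑ u, ∑ v, T.resistance u v =
      2 * ∑ e ∈ T.G.edgeFinset, SVal (T.G.deleteEdges {e}) / T.ew e := by
  simp only [resistance_apply]
  rw [sum_congr rfl fun u _ => sum_comm, sum_comm, mul_sum]
  refine sum_congr rfl fun e he => ?_
  rw [← Fintype.sum_prod_type' (f := fun u v =>
      if ¬ (T.G.deleteEdges {e}).Reachable u v then (T.ew e)⁻¹ else 0)]
  simp only [← sum_filter, sum_const, nsmul_eq_mul,
    card_not_reachable_deleteEdges hT (mem_edgeFinset.mp he)]
  ring

end WGraph

theorem stmt6 {n : ℕ} (T : WGraph n) (hT : T.G.IsTree) :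
    sumInvEig T.lap =
      (1 / n) * ∑ᶠ e ∈ T.G.edgeSet, SVal (T.G.deleteEdges {e}) / T.ew e := by
  have hinv : ∀ f, ∑ i, f i = 0 → T.lap.mulVec (((-2 : ℝ)⁻¹ • T.resistance).mulVec f) = f :=
    fun f hf => by
      rw [Matrix.smul_mulVec, Matrix.mulVec_smul, WGraph.lap_mulVec_resistance_mulVec hT hf,
        smul_smul]
      norm_num
  have htrace : T.resistance.trace = 0 := by simp [Matrix.trace, WGraph.resistance_self]
  rw [sumInvEig, dif_pos T.lap_isHermitian, T.lap_isHermitian.sum_inv_eigenvalues_eq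
    T.lap_mulVec_one (fun _ => T.eq_of_lap_mulVec_eq_zero hT.connected) hinv]
  simp only [Matrix.trace_smul, htrace, Matrix.smul_apply, smul_eq_mul, ← Finset.mul_sum,
    WGraph.sum_resistance hT, Fintype.card_fin, ← SimpleGraph.coe_edgeFinset,
    finsum_mem_coe_finset]
  ring
end
end
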